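/- arXiv:1211.2952 — 2 statements merged into one kernel-verified Lean document; each statement's English description precedes it below -/
import Mathlib

section
/- Let L be a positive linear operator on L¹(m) (i.e., f ≥ 0 a.e. implies Lf ≥ 0 a.e.) that preserves integrals (∫ Lf dm = ∫ f dm for all f). If h and h' are nonnegative fixed points of L, then min(h, h') is also a fixed point of L. -/
open MeasureTheory

/-- A positive, integral-preserving linear operator on L¹(m) fixes the pointwise
minimum of two nonnegative fixed points. -/
theorem stmt0 {M : Type*} [MeasurableSpace M] (m : Measure M) [SigmaFinite m]
    (L : Lp ℝ 1 m →ₗ[ℝ] Lp ℝ 1 m)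
    (hpos : ∀ f : Lp ℝ 1 m, 0 ≤ f → 0 ≤ L f)
    (hint : ∀ f : Lp ℝ 1 m, ∫ x, (L f : M → ℝ) x ∂m = ∫ x, (f : M → ℝ) x ∂m)
    (h h' : Lp ℝ 1 m) (hh : 0 ≤ h) (hh' : 0 ≤ h')
    (hfix : L h = h) (hfix' : L h' = h') :
    L (h ⊓ h') = h ⊓ h' := by
  set g := h ⊓ h' with hg
  have hmono : ∀ a b : Lp ℝ 1 m, a ≤ b → L a ≤ L b := by
    intro a b hab
    have := hpos (b - a) (by simpa [sub_nonneg] using hab)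
    rw [map_sub] at this
    simpa [sub_nonneg] using this
  have h1 : L g ≤ h := hfix ▸ hmono g h inf_le_left
  have h2 : L g ≤ h' := hfix' ▸ hmono g h' inf_le_right
  have hle : L g ≤ g := le_inf h1 h2
  -- integral argument: g - L g ≥ 0, integral zero, hence zero
  have hd : 0 ≤ g - L g := by simpa [sub_nonneg] using hle
  have hint0 : ∫ x, ((g - L g : Lp ℝ 1 m) : M → ℝ) x ∂m = 0 := by
    have hcoe : ((g - L g : Lp ℝ 1 m) : M → ℝ) =ᵐ[m]
        fun x => (g : M → ℝ) x - ((L g : Lp ℝ 1 m) : M → ℝ) x := Lp.coeFn_sub g (L g)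
    rw [integral_congr_ae hcoe, integral_sub (L1.integrable_coeFn g) (L1.integrable_coeFn (L g)),
      hint g, sub_self]
  have hnn : 0 ≤ᵐ[m] ((g - L g : Lp ℝ 1 m) : M → ℝ) := (Lp.coeFn_nonneg _).mpr hd
  have hzero : ((g - L g : Lp ℝ 1 m) : M → ℝ) =ᵐ[m] 0 :=
    (integral_eq_zero_iff_of_nonneg_ae hnn (L1.integrable_coeFn _)).mp hint0
  have : g - L g = 0 := by
    ext1
    exact hzero.trans (Lp.coeFn_zero ℝ 1 m).symm
  have := sub_eq_zero.mp this
  exact this.symm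
end

section
/- (Positivity propagation along pseudo-orbits.) Under the hypotheses: (L_ε f)(x) = ∫ p_ε(y,x) f(y) dm(y) with p_ε(y,x) > 0 iff d(Ty,x) < ε; f ≥ 0 integrable; {x_i}_{i=0}^N an ε-pseudo-orbit such that each x_j is a continuity point of both T and of L_ε^j f; if (L_ε^i f)(x_i) > 0 for some 0 ≤ i < N, then (L_ε^k f)(x_k) > 0 for all i < k ≤ N. -/
open MeasureTheory

/-- The perturbed transfer operator (L_ε f)(x) = ∫ p(y,x) f(y) dm(y). -/
noncomputable def transferOp {M : Type*} [MeasurableSpace M] (m : Measure M)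
    (p : M → M → ℝ) (f : M → ℝ) : M → ℝ := fun x => ∫ y, p y x * f y ∂m

/-- Positivity propagates along ε-pseudo-orbits under iteration of L_ε. -/
theorem stmt6 {M : Type*} [MetricSpace M] [MeasurableSpace M] [BorelSpace M]
    (m : Measure M) (hballs : ∀ (x : M) (r : ℝ), 0 < r → 0 < m (Metric.ball x r))
    (T : M → M) (ε : ℝ) (hε : 0 < ε) (p : M → M → ℝ)
    (hp : ∀ y x, 0 < p y x ↔ dist (T y) x < ε) (hp0 : ∀ y x, 0 ≤ p y x)
    (f : M → ℝ) (hf0 : ∀ x, 0 ≤ f x)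
    (hint : ∀ (j : ℕ) (x : M), Integrable (fun y => p y x * ((transferOp m p)^[j] f) y) m)
    (N : ℕ) (x : ℕ → M) (horb : ∀ i < N, dist (T (x i)) (x (i + 1)) < ε)
    (hcont : ∀ j ≤ N, ContinuousAt T (x j) ∧ ContinuousAt ((transferOp m p)^[j] f) (x j))
    (i : ℕ) (hiN : i < N) (hpos : 0 < ((transferOp m p)^[i] f) (x i)) :
    ∀ k, i < k → k ≤ N → 0 < ((transferOp m p)^[k] f) (x k) := by
  -- nonnegativity of all iterates
  have hnn : ∀ j y, 0 ≤ ((transferOp m p)^[j] f) y := by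
    intro j
    induction j with
    | zero => simpa using hf0
    | succ n ih =>
      intro y
      rw [Function.iterate_succ_apply']
      exact integral_nonneg fun z => mul_nonneg (hp0 z y) (ih z)
  -- key step
  have key : ∀ j, j < N → 0 < ((transferOp m p)^[j] f) (x j) →
      0 < ((transferOp m p)^[j+1] f) (x (j+1)) := by
    intro j hjN hposj
    obtain ⟨hT, hg⟩ := hcont j (le_of_lt hjN)
    set g := (transferOp m p)^[j] f with hgdef
    have h1 : ∀ᶠ y in nhds (x j), 0 < g y := hg.eventually (eventually_gt_nhds hposj)
    have h2 : ∀ᶠ y in nhds (x j), T y ∈ Metric.ball (x (j+1)) ε := by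
      apply hT.eventually_mem
      exact Metric.isOpen_ball.mem_nhds (by simpa [Metric.mem_ball] using horb j hjN)
    obtain ⟨r, hr, hball⟩ := Metric.eventually_nhds_iff.mp (h1.and h2)
    rw [Function.iterate_succ_apply']
    show 0 < ∫ y, p y (x (j+1)) * g y ∂m
    have hintg := hint j (x (j+1))
    rw [(integral_pos_iff_support_of_nonneg_ae
        (Filter.Eventually.of_forall fun z => mul_nonneg (hp0 z (x (j+1))) (hnn j z)) hintg :
        (0 < ∫ y, p y (x (j+1)) * g y ∂m) ↔ _)]
    refine lt_of_lt_of_le (hballs (x j) r hr) (measure_mono ?_)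
    intro z hz
    have hz' := hball (Metric.mem_ball.mp hz)
    have hpz : 0 < p z (x (j+1)) := (hp z (x (j+1))).mpr (Metric.mem_ball.mp hz'.2)
    exact ne_of_gt (mul_pos hpz hz'.1)
  -- induction
  have main : ∀ k, i ≤ k → k ≤ N → 0 < ((transferOp m p)^[k] f) (x k) := by
    intro k
    induction k with
    | zero =>
      intro h1 _
      have : i = 0 := Nat.le_zero.mp h1
      subst this; exact hpos
    | succ n ih =>
      intro h1 h2
      rcases Nat.lt_or_ge i (n+1) with h | h
      · exact key n (by omega) (ih (by omega) (by omega))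
      · have : i = n + 1 := by omega
        subst this; exact hpos
  intro k hik hkN
  exact main k (le_of_lt hik) hkN
end
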